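/- Let 1 < p < ∞ with conjugate exponent p', and let 1 ≤ q₁, q₂ ≤ ∞ satisfy 1/q₁ + 1/q₂ ≥ 1. If f ∈ L^{p,q₁}(ℝⁿ) and g ∈ L^{p',q₂}(ℝⁿ), then the convolution h = f * g is essentially bounded and ‖h‖_{L^∞} ≤ ‖f‖_{L^{p,q₁}} ‖g‖_{L^{p',q₂}}. -/

import Mathlib

open MeasureTheory ENNReal Real Filter
open scoped FourierTransform RealInnerProductSpace Topology

noncomputable section

namespace MHD

attribute [local instance 10] Classical.propDecidable

abbrev V (n : ℕ) := EuclideanSpace ℝ (Fin n)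

/-- The distribution function of `f`. -/
def distFn {α F : Type*} [MeasurableSpace α] [NormedAddCommGroup F]
    (μ : Measure α) (f : α → F) (lam : ℝ≥0∞) : ℝ≥0∞ :=
  μ {x | lam < ENNReal.ofReal ‖f x‖}

/-- The decreasing rearrangement of `f`. -/
def rearr {α F : Type*} [MeasurableSpace α] [NormedAddCommGroup F]
    (μ : Measure α) (f : α → F) (t : ℝ≥0∞) : ℝ≥0∞ :=
  sInf {lam | distFn μ f lam ≤ t}

/-- The Lorentz quasinorm `L^{p,q}` (`p` a finite real exponent, `q ∈ [1,∞]`),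
defined via the decreasing rearrangement. -/
def lorentzNorm {α F : Type*} [MeasurableSpace α] [NormedAddCommGroup F]
    (μ : Measure α) (p : ℝ) (q : ℝ≥0∞) (f : α → F) : ℝ≥0∞ :=
  if q = ∞ then ⨆ t : {t : ℝ // 0 < t},
      ENNReal.ofReal ((t : ℝ) ^ (1/p)) * rearr μ f (ENNReal.ofReal t)
  else (∫⁻ t in Set.Ioi (0:ℝ),
      (ENNReal.ofReal (t ^ (1/p)) * rearr μ f (ENNReal.ofReal t)) ^ q.toReal
        / ENNReal.ofReal t) ^ (1 / q.toReal)

/-- Convolution of two complex valued functions on `ℝⁿ`. -/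
def conv {n : ℕ} (f g : V n → ℂ) (x : V n) : ℂ := ∫ y, f y * g (x - y)

/-- `ℓ^r` norm over `ℤ` with values in `ℝ≥0∞`. -/
def lr (r : ℝ≥0∞) (a : ℤ → ℝ≥0∞) : ℝ≥0∞ :=
  if r = ∞ then ⨆ j, a j else (∑' j, a j ^ r.toReal) ^ (1 / r.toReal)

/-- Lebesgue norm in time of an `ℝ≥0∞`-valued function over a time set `I`. -/
def tnorm (ρ : ℝ≥0∞) (I : Set ℝ) (F : ℝ → ℝ≥0∞) : ℝ≥0∞ :=
  if ρ = ∞ then ⨆ t ∈ I, F t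
  else (∫⁻ t in I, F t ^ ρ.toReal) ^ (1 / ρ.toReal)

/-- Partial derivative in the `i`-th coordinate direction. -/
def pd {n : ℕ} {E : Type*} [NormedAddCommGroup E] [NormedSpace ℝ E]
    (i : Fin n) (f : V n → E) (x : V n) : E :=
  fderiv ℝ f x (EuclideanSpace.single i 1)

/-- The Laplacian. -/
def lap {n : ℕ} {E : Type*} [NormedAddCommGroup E] [NormedSpace ℝ E]
    (f : V n → E) (x : V n) : E :=
  ∑ i, pd i (fun y => pd i f y) x

/-- Littlewood-Paley frequency localization operator `Δ_j` associated with the bump `φ`. -/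
def LP {n : ℕ} (φ : V n → ℝ) (j : ℤ) (f : V n → ℂ) : V n → ℂ :=
  𝓕⁻ fun ξ => ((φ ((2:ℝ) ^ (-j) • ξ) : ℝ) : ℂ) * 𝓕 f ξ

/-- Low-frequency cut-off `S_j = ∑_{k ≤ j-1} Δ_k`. -/
def LPlow {n : ℕ} (φ : V n → ℝ) (j : ℤ) (f : V n → ℂ) : V n → ℂ :=
  fun x => ∑' k : {k : ℤ // k < j}, LP φ (k : ℤ) f x

/-- A standard Littlewood-Paley bump function: smooth, nonnegative, supported in the
annulus `{3/4 ≤ |ξ| ≤ 8/3}`, whose dyadic dilates form a partition of unity away from `0`. -/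
structure IsLPFamily {n : ℕ} (φ : V n → ℝ) : Prop where
  smooth : ContDiff ℝ (⊤ : ℕ∞) φ
  nonneg : ∀ ξ, 0 ≤ φ ξ
  support : ∀ ξ : V n, φ ξ ≠ 0 → 3/4 ≤ ‖ξ‖ ∧ ‖ξ‖ ≤ 8/3
  sum_one : ∀ ξ : V n, ξ ≠ 0 → HasSum (fun j : ℤ => φ ((2:ℝ) ^ (-j) • ξ)) 1

/-- Homogeneous Besov norm `Ḃ^s_{p,r}` defined by the Littlewood-Paley decomposition. -/
def besovNorm {n : ℕ} (φ : V n → ℝ) (s : ℝ) (p r : ℝ≥0∞) (f : V n → ℂ) : ℝ≥0∞ :=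
  lr r fun j => ENNReal.ofReal ((2:ℝ) ^ (s * (j:ℝ))) * eLpNorm (LP φ j f) p volume

/-- Chemin-Lerner mixed time-space Besov norm `L̃^ρ(I; Ḃ^s_{p,r})`. -/
def clNorm {n : ℕ} (φ : V n → ℝ) (ρ : ℝ≥0∞) (I : Set ℝ) (s : ℝ) (p r : ℝ≥0∞)
    (u : ℝ → V n → ℂ) : ℝ≥0∞ :=
  lr r fun j => ENNReal.ofReal ((2:ℝ) ^ (s * (j:ℝ))) *
    tnorm ρ I fun t => eLpNorm (LP φ j (u t)) p volume

/-- The complexification of the `i`-th component of a real vector field. -/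
def cplx {n : ℕ} (a : V n → Fin n → ℝ) (i : Fin n) : V n → ℂ := fun x => (a x i : ℂ)

/-- Besov norm of a real vector field (sum of the norms of the components). -/
def besovNormV {n : ℕ} (φ : V n → ℝ) (s : ℝ) (p r : ℝ≥0∞) (a : V n → Fin n → ℝ) : ℝ≥0∞ :=
  ∑ i, besovNorm φ s p r (cplx a i)

/-- Chemin-Lerner norm of a time dependent real vector field. -/
def clNormV {n : ℕ} (φ : V n → ℝ) (ρ : ℝ≥0∞) (I : Set ℝ) (s : ℝ) (p r : ℝ≥0∞)
    (u : ℝ → V n → Fin n → ℝ) : ℝ≥0∞ :=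
  ∑ i, clNorm φ ρ I s p r fun t => cplx (u t) i

/-- Continuity in time with values in the Besov space, expressed through the norm. -/
def ContBesov {n : ℕ} (φ : V n → ℝ) (I : Set ℝ) (s : ℝ) (p r : ℝ≥0∞)
    (u : ℝ → V n → Fin n → ℝ) : Prop :=
  ∀ t₀ ∈ I, Tendsto (fun t => besovNormV φ s p r fun x i => u t x i - u t₀ x i)
    (nhdsWithin t₀ I) (nhds 0)

/-- Divergence-free vector field. -/
def divFree {n : ℕ} (a : V n → Fin n → ℝ) : Prop :=
  ∀ x, ∑ j, pd j (fun y => a y j) x = 0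

/-- Squared Euclidean norm of a vector. -/
def sq {n : ℕ} (v : Fin n → ℝ) : ℝ := ∑ i, (v i) ^ 2

/-- Euclidean dot product. -/
def dotF {n : ℕ} (v w : Fin n → ℝ) : ℝ := ∑ i, v i * w i

/-- Squared Euclidean norm of the full spatial gradient of a vector field. -/
def gradSq {n : ℕ} (a : V n → Fin n → ℝ) (x : V n) : ℝ :=
  ∑ i, ∑ k, (pd k (fun y => a y i) x) ^ 2

/-- The advective derivative `(a·∇)b`. -/
def advect {n : ℕ} (a b : V n → Fin n → ℝ) (x : V n) : Fin n → ℝ :=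
  fun i => ∑ k, a x k * pd k (fun y => b y i) x

/-- Divergence of the tensor product: `(∇·(a⊗b))_i = ∑_j ∂_j (a_j b_i)`. -/
def divT {n : ℕ} (a b : V n → Fin n → ℝ) (x : V n) : Fin n → ℝ :=
  fun i => ∑ j, pd j (fun y => a y j * b y i) x

/-- The Leray projector onto divergence free vector fields, as a Fourier multiplier. -/
def leray {n : ℕ} (F : V n → Fin n → ℝ) : V n → Fin n → ℝ := fun x i =>
  (𝓕⁻ (fun ξ : V n => 𝓕 (cplx F i) ξ -
      (if ξ = 0 then 0 else ((ξ i : ℝ) : ℂ) *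
        (∑ j, ((ξ j : ℝ) : ℂ) * 𝓕 (cplx F j) ξ) / ((‖ξ‖ ^ 2 : ℝ) : ℂ))) x).re

/-- The heat kernel on `ℝⁿ`. -/
def heatKernel {n : ℕ} (t : ℝ) (x : V n) : ℝ :=
  (4 * π * t) ^ (-(n:ℝ)/2) * Real.exp (-‖x‖ ^ 2 / (4 * t))

/-- The heat semigroup `e^{tΔ}` acting on scalar functions (the identity for `t ≤ 0`). -/
def heat {n : ℕ} (t : ℝ) (f : V n → ℝ) : V n → ℝ :=
  if t ≤ 0 then f else fun x => ∫ y, heatKernel t (x - y) * f y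

/-- Mild (integral) formulation of the incompressible MHD system on the time set `I`. -/
def IsMildMHD {n : ℕ} (I : Set ℝ) (u₀ b₀ : V n → Fin n → ℝ)
    (u b : ℝ → V n → Fin n → ℝ) : Prop :=
  (∀ t ∈ I, ∀ x, ∀ i, u t x i = heat t (fun y => u₀ y i) x -
      ∫ s in Set.Ioc 0 t, heat (t - s)
        (fun y => leray (divT (u s) (u s)) y i - leray (divT (b s) (b s)) y i) x) ∧
  (∀ t ∈ I, ∀ x, ∀ i, b t x i = heat t (fun y => b₀ y i) x -
      ∫ s in Set.Ioc 0 t, heat (t - s)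
        (fun y => leray (divT (u s) (b s)) y i - leray (divT (b s) (u s)) y i) x)

/-- Weak (distributional) formulation of the MHD system against smooth, compactly supported,
divergence-free test fields (the pressure disappears). -/
def IsWeakMHD {n : ℕ} (u₀ b₀ : V n → Fin n → ℝ) (u b : ℝ → V n → Fin n → ℝ) : Prop :=
  u 0 = u₀ ∧ b 0 = b₀ ∧ (∀ t, 0 ≤ t → divFree (u t) ∧ divFree (b t)) ∧
  ∀ ψ : ℝ → V n → Fin n → ℝ,
    ContDiff ℝ (⊤ : ℕ∞) (fun z : ℝ × V n => ψ z.1 z.2) →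
    HasCompactSupport (fun z : ℝ × V n => ψ z.1 z.2) →
    (∀ t, divFree (ψ t)) →
    ∀ t, 0 ≤ t →
      (((∫ x, dotF (u t x) (ψ t x)) - ∫ x, dotF (u₀ x) (ψ 0 x))
        = ∫ s in Set.Ioc 0 t, ∫ x,
            (dotF (u s x) (fun i => deriv (fun τ => ψ τ x i) s)
              + dotF (u s x) (fun i => lap (fun y => ψ s y i) x)
              + ∑ i, ∑ j, (u s x j * u s x i - b s x j * b s x i)
                  * pd j (fun y => ψ s y i) x)) ∧
      (((∫ x, dotF (b t x) (ψ t x)) - ∫ x, dotF (b₀ x) (ψ 0 x))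
        = ∫ s in Set.Ioc 0 t, ∫ x,
            (dotF (b s x) (fun i => deriv (fun τ => ψ τ x i) s)
              + dotF (b s x) (fun i => lap (fun y => ψ s y i) x)
              + ∑ i, ∑ j, (u s x j * b s x i - b s x j * u s x i)
                  * pd j (fun y => ψ s y i) x))

/-- The Leray energy inequality. -/
def EnergyIneq {n : ℕ} (u₀ b₀ : V n → Fin n → ℝ) (u b : ℝ → V n → Fin n → ℝ) : Prop :=
  ∀ t, 0 ≤ t →
    (∫⁻ x, ENNReal.ofReal (sq (u t x) + sq (b t x)))
      + 2 * ∫⁻ s in Set.Ioc 0 t, ∫⁻ x, ENNReal.ofReal (gradSq (u s) x + gradSq (b s) x)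
    ≤ ∫⁻ x, ENNReal.ofReal (sq (u₀ x) + sq (b₀ x))

/-- A Leray weak solution: an `L²` weak solution satisfying the energy inequality. -/
def IsLerayWeak {n : ℕ} (u₀ b₀ : V n → Fin n → ℝ) (u b : ℝ → V n → Fin n → ℝ) : Prop :=
  IsWeakMHD u₀ b₀ u b ∧ EnergyIneq u₀ b₀ u b ∧
  (⨆ t ∈ Set.Ici (0:ℝ), ∫⁻ x, ENNReal.ofReal (sq (u t x) + sq (b t x))) < ∞ ∧
  (∫⁻ s in Set.Ioi (0:ℝ), ∫⁻ x, ENNReal.ofReal (gradSq (u s) x + gradSq (b s) x)) < ∞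


/-- Bony paraproduct `T_u v = ∑_j S_{j-1}u Δ_j v`. -/
def paraP {n : ℕ} (φ : V n → ℝ) (u v : V n → ℂ) (x : V n) : ℂ :=
  ∑' j : ℤ, LPlow φ (j - 1) u x * LP φ j v x

/-- Bony remainder `R(u,v) = ∑_{|i-j|≤1} Δ_i u Δ_j v`. -/
def remP {n : ℕ} (φ : V n → ℝ) (u v : V n → ℂ) (x : V n) : ℂ :=
  ∑' j : ℤ, (LP φ (j - 1) u x + LP φ j u x + LP φ (j + 1) u x) * LP φ j v x



section AuxLemmas

open Set

lemma mrpow {f : ℝ → ℝ≥0∞} (h : Measurable f) (y : ℝ) : Measurable fun t => f t ^ y :=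
  ENNReal.continuous_rpow_const.measurable.comp h

variable {α F' : Type*} [MeasurableSpace α] [NormedAddCommGroup F']

lemma distFn_antitone (μ : Measure α) (f : α → F') : Antitone (distFn μ f) :=
  fun _ _ hst => measure_mono (fun _ hx => lt_of_le_of_lt hst hx)

lemma le_rearr_of_lt_distFn {μ : Measure α} {f : α → F'} {lam t : ℝ≥0∞}
    (h : t < distFn μ f lam) : lam ≤ rearr μ f t := by
  refine le_sInf fun m hm => ?_
  by_contra hc
  push_neg at hc
  exact absurd (le_trans (distFn_antitone μ f hc.le) hm) (not_le.mpr h)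

lemma restrict_meas_lt (x : ℝ≥0∞) :
    (volume.restrict (Ioi (0:ℝ))) {σ : ℝ | ENNReal.ofReal σ < x} = x := by
  rw [Measure.restrict_apply' measurableSet_Ioi]
  rcases eq_or_ne x ∞ with rfl | hx
  · have h : {σ : ℝ | ENNReal.ofReal σ < ∞} ∩ Ioi 0 = Ioi 0 := by
      ext σ; simp [ENNReal.ofReal_lt_top]
    rw [h, Real.volume_Ioi]
  · have h : {σ : ℝ | ENNReal.ofReal σ < x} ∩ Ioi 0 = Ioo 0 x.toReal := by
      ext σ
      simp only [mem_inter_iff, mem_setOf_eq, mem_Ioi, mem_Ioo]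
      constructor
      · rintro ⟨h1, h2⟩
        exact ⟨h2, (ENNReal.ofReal_lt_iff_lt_toReal h2.le hx).mp h1⟩
      · rintro ⟨h1, h2⟩
        exact ⟨(ENNReal.ofReal_lt_iff_lt_toReal h1.le hx).mpr h2, h1⟩
    rw [h, Real.volume_Ioo, sub_zero, ENNReal.ofReal_toReal hx]

lemma meas_lt_distFn_le_rearr (μ : Measure α) (f : α → F') (t : ℝ≥0∞) :
    (volume.restrict (Ioi (0:ℝ))) {σ : ℝ | t < distFn μ f (ENNReal.ofReal σ)} ≤ rearr μ f t := by
  rcases eq_or_ne (rearr μ f t) ∞ with h | h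
  · simp [h]
  · rw [Measure.restrict_apply' measurableSet_Ioi]
    refine le_trans (measure_mono (t := Ioc 0 (rearr μ f t).toReal) ?_) ?_
    · rintro σ ⟨h1, h2⟩
      exact ⟨h2, (ENNReal.ofReal_le_iff_le_toReal h).mp (le_rearr_of_lt_distFn h1)⟩
    · rw [Real.volume_Ioc, sub_zero, ENNReal.ofReal_toReal h]

lemma distFn_comp_measurable (μ : Measure α) (f : α → F') :
    Measurable (fun σ : ℝ => distFn μ f (ENNReal.ofReal σ)) :=
  Antitone.measurable (fun _ _ h => distFn_antitone μ f (ENNReal.ofReal_le_ofReal h))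

lemma distFn_congr {μ : Measure α} {f f' : α → F'} (h : f =ᵐ[μ] f') :
    distFn μ f = distFn μ f' := by
  funext lam
  refine measure_congr ?_
  rw [eventuallyEq_set]
  filter_upwards [h] with x hx
  simp [Set.mem_setOf_eq, hx]

lemma rearr_congr {μ : Measure α} {f f' : α → F'} (h : f =ᵐ[μ] f') :
    rearr μ f = rearr μ f' := by
  unfold rearr; rw [distFn_congr h]

lemma lorentzNorm_congr {μ : Measure α} {f f' : α → F'} (p : ℝ) (q : ℝ≥0∞)
    (h : f =ᵐ[μ] f') : lorentzNorm μ p q f = lorentzNorm μ p q f' := by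
  unfold lorentzNorm; rw [rearr_congr h]

/-- The reverse power inequality for antitone functions. -/
lemma rev_power {c : ℝ → ℝ≥0∞} (hc : Antitone c) {r : ℝ} (hr0 : 0 < r) (hr1 : r ≤ 1) :
    ∫⁻ t in Ioi (0:ℝ), c t ≤
      (∫⁻ t in Ioi (0:ℝ), c t ^ r * ENNReal.ofReal t ^ (r - 1)) ^ (1 / r) := by
  have hcm : Measurable c := hc.measurable
  set R := ∫⁻ t in Ioi (0:ℝ), c t ^ r * ENNReal.ofReal t ^ (r - 1) with hR
  set d : ℕ → ℝ → ℝ≥0∞ :=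
    fun n => (Ioc (0:ℝ) (n:ℝ)).indicator (fun s => min (c s) (n:ℝ≥0∞)) with hd
  set X : ℕ → ℝ≥0∞ := fun n => ∫⁻ t in Ioc (0:ℝ) (n:ℝ), min (c t) (n:ℝ≥0∞) with hX
  have hdm : ∀ n, Measurable (d n) := fun n =>
    (Measurable.min hcm measurable_const).indicator measurableSet_Ioc
  have h1 : ∀ n, ∫⁻ t in Ioi (0:ℝ), d n t = X n := by
    intro n
    rw [hd, lintegral_indicator measurableSet_Ioc, Measure.restrict_restrict measurableSet_Ioc,
      Set.inter_eq_left.mpr Set.Ioc_subset_Ioi_self]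
  have hXfin : ∀ n, X n ≠ ∞ := by
    intro n
    have h2 : X n ≤ (n : ℝ≥0∞) * ENNReal.ofReal n := by
      rw [hX]
      refine le_trans (lintegral_mono fun t => min_le_right _ _) ?_
      rw [setLIntegral_const, Real.volume_Ioc, sub_zero]
    exact (h2.trans_lt (by finiteness)).ne
  have hkey : ∀ n : ℕ, ∀ t ∈ Ioc (0:ℝ) (n:ℝ), min (c t) (n:ℝ≥0∞) * ENNReal.ofReal t ≤ X n := by
    intro n t ht
    calc min (c t) (n:ℝ≥0∞) * ENNReal.ofReal t
        = ∫⁻ _ in Ioc (0:ℝ) t, min (c t) (n:ℝ≥0∞) := by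
          rw [setLIntegral_const, Real.volume_Ioc, sub_zero]
      _ ≤ ∫⁻ s in Ioc (0:ℝ) t, min (c s) (n:ℝ≥0∞) := by
          refine setLIntegral_mono (hcm.min measurable_const) fun s hs => ?_
          exact min_le_min (hc hs.2) le_rfl
      _ ≤ X n := lintegral_mono_set (Set.Ioc_subset_Ioc_right ht.2)
  have hC : ∀ n, X n ≤ X n ^ (1 - r) * R := by
    intro n
    have h1r : (0:ℝ) ≤ 1 - r := by linarith
    calc X n = ∫⁻ t in Ioc (0:ℝ) (n:ℝ),
          min (c t) (n:ℝ≥0∞) ^ r * min (c t) (n:ℝ≥0∞) ^ (1 - r) := by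
          refine setLIntegral_congr_fun measurableSet_Ioc (fun t _ => ?_)
          rw [← ENNReal.rpow_add_of_nonneg r (1-r) hr0.le h1r]
          norm_num
      _ ≤ ∫⁻ t in Ioc (0:ℝ) (n:ℝ),
          min (c t) (n:ℝ≥0∞) ^ r * (X n ^ (1 - r) * ENNReal.ofReal t ^ (r - 1)) := by
          refine setLIntegral_mono' measurableSet_Ioc fun t ht => ?_
          refine mul_le_mul_right ?_ _
          have hmt : min (c t) (n:ℝ≥0∞) ≤ X n * (ENNReal.ofReal t)⁻¹ := by
            rw [← div_eq_mul_inv]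
            exact (ENNReal.le_div_iff_mul_le (Or.inl (ENNReal.ofReal_pos.mpr ht.1).ne')
              (Or.inl ENNReal.ofReal_ne_top)).mpr (hkey n t ht)
          calc min (c t) (n:ℝ≥0∞) ^ (1 - r) ≤ (X n * (ENNReal.ofReal t)⁻¹) ^ (1 - r) :=
                ENNReal.rpow_le_rpow hmt h1r
            _ = X n ^ (1 - r) * ENNReal.ofReal t ^ (r - 1) := by
                rw [ENNReal.mul_rpow_of_nonneg _ _ h1r, ENNReal.inv_rpow,
                  ← ENNReal.rpow_neg, neg_sub]
      _ = ∫⁻ t in Ioc (0:ℝ) (n:ℝ),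
            X n ^ (1 - r) * (min (c t) (n:ℝ≥0∞) ^ r * ENNReal.ofReal t ^ (r - 1)) := by
          congr 1; funext t; ring
      _ = X n ^ (1 - r) * ∫⁻ t in Ioc (0:ℝ) (n:ℝ),
            min (c t) (n:ℝ≥0∞) ^ r * ENNReal.ofReal t ^ (r - 1) :=
          lintegral_const_mul _ ((mrpow (hcm.min measurable_const) r).mul
            (mrpow ENNReal.measurable_ofReal (r-1)))
      _ ≤ X n ^ (1 - r) * R := by
          refine mul_le_mul_right ?_ _
          refine le_trans (lintegral_mono fun t =>
            mul_le_mul_left (ENNReal.rpow_le_rpow (min_le_left _ _) hr0.le) _) ?_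
          exact lintegral_mono_set Set.Ioc_subset_Ioi_self
  have hD : ∀ n, X n ≤ R ^ (1 / r) := by
    intro n
    rcases eq_or_ne (X n) 0 with h0 | h0
    · simp [h0]
    have hrle : X n ^ r ≤ R := by
      calc X n ^ r = X n * X n ^ (r - 1) := by
            have h3 : X n ^ r = X n ^ (1:ℝ) * X n ^ (r-1) := by
              rw [← ENNReal.rpow_add 1 (r-1) h0 (hXfin n)]; norm_num
            rw [h3, ENNReal.rpow_one]
        _ ≤ (X n ^ (1 - r) * R) * X n ^ (r - 1) := mul_le_mul_left (hC n) _
        _ = R * (X n ^ (1 - r) * X n ^ (r - 1)) := by ring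
        _ = R := by
            rw [← ENNReal.rpow_add _ _ h0 (hXfin n)]
            norm_num
    calc X n = (X n ^ r) ^ (1 / r) := by
          rw [← ENNReal.rpow_mul, mul_one_div_cancel hr0.ne', ENNReal.rpow_one]
      _ ≤ R ^ (1 / r) := ENNReal.rpow_le_rpow hrle (by positivity)
  have hmono : Monotone d := by
    intro m n hmn t
    by_cases ht : t ∈ Ioc (0:ℝ) (m:ℝ)
    · simp only [hd, Set.indicator_of_mem ht, Set.indicator_of_mem
        (Set.Ioc_subset_Ioc_right (show (m:ℝ) ≤ n by exact_mod_cast hmn) ht)]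
      exact min_le_min le_rfl (by exact_mod_cast hmn)
    · simp [hd, Set.indicator_of_notMem ht]
  have hsup : ∀ t ∈ Ioi (0:ℝ), ⨆ n, d n t = c t := by
    intro t ht
    refine le_antisymm (iSup_le fun n => ?_) ?_
    · by_cases h : t ∈ Ioc (0:ℝ) (n:ℝ)
      · simp only [hd, Set.indicator_of_mem h]; exact min_le_left _ _
      · simp [hd, Set.indicator_of_notMem h]
    · refine le_of_forall_lt fun k hk => ?_
      obtain ⟨n, hn⟩ := exists_nat_gt (max t k.toReal)
      have htn : t ∈ Ioc (0:ℝ) (n:ℝ) := ⟨ht, ((le_max_left _ _).trans hn.le)⟩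
      have hkn : k < (n:ℝ≥0∞) := by
        have hkf : k ≠ ∞ := hk.ne_top
        rw [← ENNReal.ofReal_toReal hkf, ← ENNReal.ofReal_natCast]
        exact ENNReal.ofReal_lt_ofReal_iff_of_nonneg ENNReal.toReal_nonneg |>.mpr
          ((le_max_right _ _).trans_lt hn)
      refine lt_of_lt_of_le ?_ (le_iSup (fun n => d n t) n)
      simp only [hd, Set.indicator_of_mem htn]
      exact lt_min hk hkn
  calc ∫⁻ t in Ioi (0:ℝ), c t = ∫⁻ t in Ioi (0:ℝ), ⨆ n, d n t :=
        setLIntegral_congr_fun measurableSet_Ioi (fun t ht => (hsup t ht).symm)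
    _ = ⨆ n, ∫⁻ t in Ioi (0:ℝ), d n t := lintegral_iSup hdm hmono
    _ ≤ R ^ (1 / r) := iSup_le fun n => (h1 n) ▸ hD n

/-- An abstract version of the Lorentz norm. -/
def Nq (p : ℝ) (q : ℝ≥0∞) (a : ℝ → ℝ≥0∞) : ℝ≥0∞ :=
  if q = ∞ then ⨆ t : {t : ℝ // 0 < t},
      ENNReal.ofReal ((t : ℝ) ^ (1/p)) * a (t : ℝ)
  else (∫⁻ t in Set.Ioi (0:ℝ),
      (ENNReal.ofReal (t ^ (1/p)) * a t) ^ q.toReal / ENNReal.ofReal t) ^ (1 / q.toReal)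

lemma lorentzNorm_eq_Nq (μ : Measure α) (p : ℝ) (q : ℝ≥0∞) (f : α → F') :
    lorentzNorm μ p q f = Nq p q (fun t => rearr μ f (ENNReal.ofReal t)) := rfl

/-- Hölder's inequality for the pairing of two antitone functions against Lorentz norms. -/
lemma pairing {a b : ℝ → ℝ≥0∞} (ha : Antitone a) (hb : Antitone b)
    {p p' : ℝ} (h1p : 0 ≤ 1/p) (h1p' : 0 ≤ 1/p') (hconj : 1/p + 1/p' = 1)
    {q₁ q₂ : ℝ≥0∞} (hq₁ : 1 ≤ q₁) (hq₂ : 1 ≤ q₂) (hq : 1 ≤ 1/q₁ + 1/q₂) :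
    ∫⁻ t in Ioi (0:ℝ), a t * b t ≤ Nq p q₁ a * Nq p' q₂ b := by
  set A : ℝ → ℝ≥0∞ := fun t => ENNReal.ofReal (t ^ (1/p)) * a t with hA
  set B : ℝ → ℝ≥0∞ := fun t => ENNReal.ofReal (t ^ (1/p')) * b t with hB
  have hAm : Measurable A :=
    ((Real.continuous_rpow_const h1p).measurable.ennreal_ofReal).mul ha.measurable
  have hBm : Measurable B :=
    ((Real.continuous_rpow_const h1p').measurable.ennreal_ofReal).mul hb.measurable
  have hinvm : Measurable fun t : ℝ => (ENNReal.ofReal t)⁻¹ :=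
    ENNReal.measurable_ofReal.inv
  have hab : ∀ t ∈ Ioi (0:ℝ), a t * b t = (A t * B t) * (ENNReal.ofReal t)⁻¹ := by
    intro t ht
    have h1 : ENNReal.ofReal (t ^ (1/p)) * ENNReal.ofReal (t ^ (1/p')) = ENNReal.ofReal t := by
      rw [← ENNReal.ofReal_mul (Real.rpow_nonneg (le_of_lt ht) _), ← Real.rpow_add ht,
        hconj, Real.rpow_one]
    calc a t * b t = (ENNReal.ofReal t * (ENNReal.ofReal t)⁻¹) * (a t * b t) := by
          rw [ENNReal.mul_inv_cancel (ENNReal.ofReal_pos.mpr ht).ne' ENNReal.ofReal_ne_top,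
            one_mul]
      _ = (A t * B t) * (ENNReal.ofReal t)⁻¹ := by rw [hA, hB, ← h1]; ring
  rcases eq_or_ne q₁ ∞ with hq1t | hq1t
  · -- q₁ = ∞, q₂ = 1
    have hq2 : q₂ = 1 := by
      have h2 := hq
      rw [hq1t] at h2
      simp only [ENNReal.div_top, zero_add] at h2
      have hq20 : q₂ ≠ 0 := by intro h; rw [h] at hq₂; simp at hq₂
      have h3 : 1 * q₂ ≤ 1 :=
        (ENNReal.le_div_iff_mul_le (a := 1) (b := q₂) (c := 1)
          (Or.inl hq20) (Or.inr ENNReal.one_ne_top)).mp h2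
      exact le_antisymm (by simpa using h3) hq₂
    subst hq2
    rw [Nq, if_pos hq1t, Nq, if_neg ENNReal.one_ne_top]
    simp only [ENNReal.toReal_one, ENNReal.rpow_one, one_div_one]
    calc ∫⁻ t in Ioi (0:ℝ), a t * b t
        = ∫⁻ t in Ioi (0:ℝ), (A t * B t) * (ENNReal.ofReal t)⁻¹ :=
          setLIntegral_congr_fun measurableSet_Ioi hab
      _ ≤ ∫⁻ t in Ioi (0:ℝ), (⨆ s : {s : ℝ // 0 < s},
            ENNReal.ofReal ((s : ℝ) ^ (1/p)) * a (s : ℝ)) * (B t * (ENNReal.ofReal t)⁻¹) := by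
          refine setLIntegral_mono' measurableSet_Ioi fun t ht => ?_
          have h4 : A t ≤ ⨆ s : {s : ℝ // 0 < s},
              ENNReal.ofReal ((s : ℝ) ^ (1/p)) * a (s : ℝ) :=
            le_iSup (fun s : {s : ℝ // 0 < s} =>
              ENNReal.ofReal ((s : ℝ) ^ (1/p)) * a (s : ℝ)) ⟨t, ht⟩
          calc A t * B t * (ENNReal.ofReal t)⁻¹
              ≤ (⨆ s : {s : ℝ // 0 < s}, ENNReal.ofReal ((s : ℝ) ^ (1/p)) * a (s : ℝ))
                  * B t * (ENNReal.ofReal t)⁻¹ := by gcongr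
            _ = (⨆ s : {s : ℝ // 0 < s}, ENNReal.ofReal ((s : ℝ) ^ (1/p)) * a (s : ℝ))
                  * (B t * (ENNReal.ofReal t)⁻¹) := mul_assoc _ _ _
      _ = (⨆ s : {s : ℝ // 0 < s}, ENNReal.ofReal ((s : ℝ) ^ (1/p)) * a (s : ℝ)) *
            ∫⁻ t in Ioi (0:ℝ), B t * (ENNReal.ofReal t)⁻¹ :=
          lintegral_const_mul _ (hBm.mul hinvm)
      _ = (⨆ s : {s : ℝ // 0 < s}, ENNReal.ofReal ((s : ℝ) ^ (1/p)) * a (s : ℝ)) *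
            ∫⁻ t in Ioi (0:ℝ), B t / ENNReal.ofReal t := by
          simp_rw [div_eq_mul_inv]
  · rcases eq_or_ne q₂ ∞ with hq2t | hq2t
    · -- q₂ = ∞, q₁ = 1
      have hq1 : q₁ = 1 := by
        have h2 := hq
        rw [hq2t] at h2
        simp only [ENNReal.div_top, add_zero] at h2
        have hq10 : q₁ ≠ 0 := by intro h; rw [h] at hq₁; simp at hq₁
        have h3 : 1 * q₁ ≤ 1 :=
          (ENNReal.le_div_iff_mul_le (a := 1) (b := q₁) (c := 1)
            (Or.inl hq10) (Or.inr ENNReal.one_ne_top)).mp h2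
        exact le_antisymm (by simpa using h3) hq₁
      subst hq1
      rw [Nq, if_neg ENNReal.one_ne_top, Nq, if_pos hq2t]
      simp only [ENNReal.toReal_one, ENNReal.rpow_one, one_div_one]
      calc ∫⁻ t in Ioi (0:ℝ), a t * b t
          = ∫⁻ t in Ioi (0:ℝ), (A t * B t) * (ENNReal.ofReal t)⁻¹ :=
            setLIntegral_congr_fun measurableSet_Ioi hab
        _ ≤ ∫⁻ t in Ioi (0:ℝ), (⨆ s : {s : ℝ // 0 < s},
              ENNReal.ofReal ((s : ℝ) ^ (1/p')) * b (s : ℝ)) * (A t * (ENNReal.ofReal t)⁻¹) := by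
            refine setLIntegral_mono' measurableSet_Ioi fun t ht => ?_
            have h4 : B t ≤ ⨆ s : {s : ℝ // 0 < s},
                ENNReal.ofReal ((s : ℝ) ^ (1/p')) * b (s : ℝ) :=
              le_iSup (fun s : {s : ℝ // 0 < s} =>
                ENNReal.ofReal ((s : ℝ) ^ (1/p')) * b (s : ℝ)) ⟨t, ht⟩
            calc A t * B t * (ENNReal.ofReal t)⁻¹
                ≤ A t * (⨆ s : {s : ℝ // 0 < s},
                    ENNReal.ofReal ((s : ℝ) ^ (1/p')) * b (s : ℝ)) * (ENNReal.ofReal t)⁻¹ :=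
                  mul_le_mul_left (mul_le_mul_right h4 _) _
              _ = (⨆ s : {s : ℝ // 0 < s}, ENNReal.ofReal ((s : ℝ) ^ (1/p')) * b (s : ℝ)) *
                  (A t * (ENNReal.ofReal t)⁻¹) := by ring
        _ = (⨆ s : {s : ℝ // 0 < s}, ENNReal.ofReal ((s : ℝ) ^ (1/p')) * b (s : ℝ)) *
              ∫⁻ t in Ioi (0:ℝ), A t * (ENNReal.ofReal t)⁻¹ :=
            lintegral_const_mul _ (hAm.mul hinvm)
        _ = (∫⁻ t in Ioi (0:ℝ), A t / ENNReal.ofReal t) *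
            (⨆ s : {s : ℝ // 0 < s}, ENNReal.ofReal ((s : ℝ) ^ (1/p')) * b (s : ℝ)) := by
            simp_rw [div_eq_mul_inv]; rw [mul_comm]
    · -- both finite
      set u := q₁.toReal with hu
      set v := q₂.toReal with hv
      have hu1 : 1 ≤ u := by
        rw [hu, ← ENNReal.toReal_one]; exact ENNReal.toReal_mono hq1t hq₁
      have hv1 : 1 ≤ v := by
        rw [hv, ← ENNReal.toReal_one]; exact ENNReal.toReal_mono hq2t hq₂
      have hu0 : 0 < u := lt_of_lt_of_le one_pos hu1
      have hv0 : 0 < v := lt_of_lt_of_le one_pos hv1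
      have hq10 : q₁ ≠ 0 := by intro h; rw [h] at hq₁; simp at hq₁
      have hq20 : q₂ ≠ 0 := by intro h; rw [h] at hq₂; simp at hq₂
      have hwq : 1 ≤ 1/u + 1/v := by
        have hfin : 1/q₁ + 1/q₂ ≠ ∞ := by
          simp [ENNReal.div_eq_top, hq10, hq20]
        have h2 : (1:ℝ≥0∞).toReal ≤ (1/q₁ + 1/q₂).toReal := ENNReal.toReal_mono hfin hq
        rw [ENNReal.toReal_add (by simp [ENNReal.div_eq_top, hq10])
          (by simp [ENNReal.div_eq_top, hq20]), ENNReal.toReal_div, ENNReal.toReal_div] at h2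
        simpa using h2
      set w := 1/u + 1/v with hwdef
      have hw0 : 0 < w := lt_of_lt_of_le one_pos hwq
      set r := 1/w with hrdef
      have hr0 : 0 < r := by positivity
      have hr1 : r ≤ 1 := by rw [hrdef, div_le_one hw0]; exact hwq
      set s₁ := u * w with hs1def
      set s₂ := v * w with hs2def
      have hs10 : s₁ ≠ 0 := by positivity
      have hs20 : s₂ ≠ 0 := by positivity
      have hs : Real.HolderConjugate s₁ s₂ := by
        rw [Real.holderConjugate_iff]
        constructor
        · have h5 : s₁ = 1 + u/v := by
            rw [hs1def, hwdef, mul_add, mul_one_div, mul_one_div, div_self hu0.ne']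
          rw [h5]
          have : 0 < u/v := div_pos hu0 hv0
          linarith
        · rw [hs1def, hs2def]
          field_simp
          rw [hwdef]
          field_simp
      have hrs1 : r * s₁ = u := by rw [hrdef, hs1def]; field_simp
      have hrs2 : r * s₂ = v := by rw [hrdef, hs2def]; field_simp
      have habm : Antitone fun t => a t * b t := fun s t h => mul_le_mul' (ha h) (hb h)
      set U : ℝ → ℝ≥0∞ := fun t => A t ^ r * ENNReal.ofReal t ^ (-(1/s₁)) with hU
      set V : ℝ → ℝ≥0∞ := fun t => B t ^ r * ENNReal.ofReal t ^ (-(1/s₂)) with hV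
      have hUm : Measurable U := (mrpow hAm r).mul (mrpow ENNReal.measurable_ofReal _)
      have hVm : Measurable V := (mrpow hBm r).mul (mrpow ENNReal.measurable_ofReal _)
      have hNq1 : Nq p q₁ a = (∫⁻ t in Ioi (0:ℝ), A t ^ u / ENNReal.ofReal t) ^ (1/u) := by
        rw [Nq, if_neg hq1t]
      have hNq2 : Nq p' q₂ b = (∫⁻ t in Ioi (0:ℝ), B t ^ v / ENNReal.ofReal t) ^ (1/v) := by
        rw [Nq, if_neg hq2t]
      have hE1 : (∫⁻ t in Ioi (0:ℝ), U t ^ s₁) = ∫⁻ t in Ioi (0:ℝ), A t ^ u / ENNReal.ofReal t := by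
        refine setLIntegral_congr_fun measurableSet_Ioi (fun t ht => ?_)
        rw [hU, ENNReal.mul_rpow_of_nonneg _ _ hs.nonneg, ← ENNReal.rpow_mul,
          ← ENNReal.rpow_mul]
        rw [hrs1, show -(1/s₁) * s₁ = -1 by field_simp, ENNReal.rpow_neg_one, div_eq_mul_inv]
      have hE2 : (∫⁻ t in Ioi (0:ℝ), V t ^ s₂) = ∫⁻ t in Ioi (0:ℝ), B t ^ v / ENNReal.ofReal t := by
        refine setLIntegral_congr_fun measurableSet_Ioi (fun t ht => ?_)
        rw [hV, ENNReal.mul_rpow_of_nonneg _ _ hs.symm.nonneg, ← ENNReal.rpow_mul,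
          ← ENNReal.rpow_mul]
        rw [hrs2, show -(1/s₂) * s₂ = -1 by field_simp, ENNReal.rpow_neg_one, div_eq_mul_inv]
      calc ∫⁻ t in Ioi (0:ℝ), a t * b t
          ≤ (∫⁻ t in Ioi (0:ℝ), (a t * b t) ^ r * ENNReal.ofReal t ^ (r - 1)) ^ (1/r) :=
            rev_power habm hr0 hr1
        _ = (∫⁻ t in Ioi (0:ℝ), U t * V t) ^ (1/r) := by
            congr 1
            refine setLIntegral_congr_fun measurableSet_Ioi (fun t ht => ?_)
            have hx0 : ENNReal.ofReal t ≠ 0 := (ENNReal.ofReal_pos.mpr ht).ne'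
            have hxt : ENNReal.ofReal t ≠ ∞ := ENNReal.ofReal_ne_top
            have e1 : ENNReal.ofReal t ^ (-r) * ENNReal.ofReal t ^ (r-1)
                = ENNReal.ofReal t ^ (-(1:ℝ)) := by
              rw [← ENNReal.rpow_add _ _ hx0 hxt]; congr 1; ring
            have e2 : ENNReal.ofReal t ^ (-(1/s₁)) * ENNReal.ofReal t ^ (-(1/s₂))
                = ENNReal.ofReal t ^ (-(1:ℝ)) := by
              rw [← ENNReal.rpow_add _ _ hx0 hxt,
                show -(1/s₁) + -(1/s₂) = -(1/s₁ + 1/s₂) by ring]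
              rw [one_div, one_div, hs.inv_add_inv_eq_one]
            rw [hab t ht, ENNReal.mul_rpow_of_nonneg _ _ hr0.le,
              ENNReal.mul_rpow_of_nonneg _ _ hr0.le, ENNReal.inv_rpow, ← ENNReal.rpow_neg]
            calc A t ^ r * B t ^ r * ENNReal.ofReal t ^ (-r) * ENNReal.ofReal t ^ (r-1)
                = A t ^ r * B t ^ r * ENNReal.ofReal t ^ (-(1:ℝ)) := by
                  rw [mul_assoc, e1]
              _ = U t * V t := by rw [hU, hV, ← e2]; ring
        _ ≤ ((∫⁻ t in Ioi (0:ℝ), U t ^ s₁) ^ (1/s₁) *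
              (∫⁻ t in Ioi (0:ℝ), V t ^ s₂) ^ (1/s₂)) ^ (1/r) := by
            refine ENNReal.rpow_le_rpow ?_ (by positivity)
            have hH := ENNReal.lintegral_mul_le_Lp_mul_Lq (volume.restrict (Ioi (0:ℝ))) hs
              hUm.aemeasurable hVm.aemeasurable
            simpa only [Pi.mul_apply] using hH
        _ = (Nq p q₁ a ^ r * Nq p' q₂ b ^ r) ^ (1/r) := by
            rw [hE1, hE2, hNq1, hNq2, ← ENNReal.rpow_mul, ← ENNReal.rpow_mul]
            congr 2
            · rw [hrdef]; field_simp; rfl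
            · rw [hrdef]; field_simp; rfl
        _ = Nq p q₁ a * Nq p' q₂ b := by
            rw [← ENNReal.mul_rpow_of_nonneg _ _ hr0.le, ← ENNReal.rpow_mul,
              mul_one_div_cancel hr0.ne', ENNReal.rpow_one]

/-- Hardy–Littlewood-type inequality for a pair of functions. -/
lemma hardy_littlewood {α F' : Type*} [MeasurableSpace α] [NormedAddCommGroup F']
    (μ : Measure α) [SigmaFinite μ]
    {f g : α → F'} (hf : Measurable fun y => ‖f y‖) (hg : Measurable fun y => ‖g y‖) :
    ∫⁻ y, ENNReal.ofReal ‖f y‖ * ENNReal.ofReal ‖g y‖ ∂μ ≤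
      ∫⁻ t in Ioi (0:ℝ), rearr μ f (ENNReal.ofReal t) * rearr μ g (ENNReal.ofReal t) := by
  classical
  set ν := volume.restrict (Ioi (0:ℝ)) with hν
  set Fn : α → ℝ≥0∞ := fun y => ENNReal.ofReal ‖f y‖ with hFn
  set Gn : α → ℝ≥0∞ := fun y => ENNReal.ofReal ‖g y‖ with hGn
  have hFm : Measurable Fn := hf.ennreal_ofReal
  have hGm : Measurable Gn := hg.ennreal_ofReal
  set K : ℝ → α → ℝ≥0∞ := fun σ y => if ENNReal.ofReal σ < Fn y then 1 else 0 with hK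
  set L : ℝ → α → ℝ≥0∞ := fun τ y => if ENNReal.ofReal τ < Gn y then 1 else 0 with hL
  have hKy : ∀ y, ∫⁻ σ, K σ y ∂ν = Fn y := by
    intro y
    have h1 : ∀ σ : ℝ, K σ y = ({σ' : ℝ | ENNReal.ofReal σ' < Fn y}).indicator
        (fun _ => (1:ℝ≥0∞)) σ := by
      intro σ; rw [hK]; simp [Set.indicator_apply, Set.mem_setOf_eq]
    calc ∫⁻ σ, K σ y ∂ν
        = ∫⁻ σ, ({σ' : ℝ | ENNReal.ofReal σ' < Fn y}).indicator (fun _ => (1:ℝ≥0∞)) σ ∂ν :=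
          lintegral_congr h1
      _ = ν {σ' : ℝ | ENNReal.ofReal σ' < Fn y} := by
          rw [lintegral_indicator (measurableSet_lt (ENNReal.measurable_ofReal)
            measurable_const), setLIntegral_one]
      _ = Fn y := restrict_meas_lt _
  have hLy : ∀ y, ∫⁻ τ, L τ y ∂ν = Gn y := by
    intro y
    have h1 : ∀ τ : ℝ, L τ y = ({τ' : ℝ | ENNReal.ofReal τ' < Gn y}).indicator
        (fun _ => (1:ℝ≥0∞)) τ := by
      intro τ; rw [hL]; simp [Set.indicator_apply, Set.mem_setOf_eq]
    calc ∫⁻ τ, L τ y ∂ν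
        = ∫⁻ τ, ({τ' : ℝ | ENNReal.ofReal τ' < Gn y}).indicator (fun _ => (1:ℝ≥0∞)) τ ∂ν :=
          lintegral_congr h1
      _ = ν {τ' : ℝ | ENNReal.ofReal τ' < Gn y} := by
          rw [lintegral_indicator (measurableSet_lt (ENNReal.measurable_ofReal)
            measurable_const), setLIntegral_one]
      _ = Gn y := restrict_meas_lt _
  have hKm : Measurable (Function.uncurry fun y σ => K σ y) := by
    have : Function.uncurry (fun y σ => K σ y) =
        fun q : α × ℝ => if ENNReal.ofReal q.2 < Fn q.1 then 1 else 0 := rfl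
    rw [this]
    exact Measurable.ite (measurableSet_lt (measurable_snd.ennreal_ofReal)
      (hFm.comp measurable_fst)) measurable_const measurable_const
  have hKLm : ∀ σ : ℝ, Measurable (Function.uncurry fun y τ => K σ y * L τ y) := by
    intro σ
    have : Function.uncurry (fun y τ => K σ y * L τ y) =
        fun q : α × ℝ => K σ q.1 * L q.2 q.1 := rfl
    rw [this]
    refine Measurable.mul ?_ ?_
    · have h5 : Measurable fun y => K σ y :=
        Measurable.ite (measurableSet_lt measurable_const hFm)
          measurable_const measurable_const
      exact h5.comp measurable_fst
    · exact Measurable.ite (measurableSet_lt (measurable_snd.ennreal_ofReal)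
        (hGm.comp measurable_fst)) measurable_const measurable_const
  have hKym : ∀ y, Measurable fun σ => K σ y := fun y =>
    Measurable.ite (measurableSet_lt ENNReal.measurable_ofReal measurable_const)
      measurable_const measurable_const
  have hLym : ∀ y, Measurable fun τ => L τ y := fun y =>
    Measurable.ite (measurableSet_lt ENNReal.measurable_ofReal measurable_const)
      measurable_const measurable_const
  -- step 1: product formula
  have step1 : ∫⁻ y, Fn y * Gn y ∂μ
      = ∫⁻ σ, ∫⁻ τ, ∫⁻ y, K σ y * L τ y ∂μ ∂ν ∂ν := by
    have hGn1 : Measurable fun q : α × ℝ => Gn q.1 := by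
      exact hGm.comp measurable_fst
    have h6 : Measurable (Function.uncurry fun y σ => K σ y * Gn y) := by
      have he : (Function.uncurry fun y σ => K σ y * Gn y) =
          fun q : α × ℝ => (Function.uncurry fun y σ => K σ y) q * Gn q.1 := rfl
      rw [he]
      exact hKm.mul hGn1
    calc ∫⁻ y, Fn y * Gn y ∂μ
        = ∫⁻ y, ∫⁻ σ, K σ y * Gn y ∂ν ∂μ := by
          refine lintegral_congr fun y => ?_
          rw [lintegral_mul_const _ (hKym y), hKy y]
      _ = ∫⁻ σ, ∫⁻ y, K σ y * Gn y ∂μ ∂ν := lintegral_lintegral_swap h6.aemeasurable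
      _ = ∫⁻ σ, ∫⁻ τ, ∫⁻ y, K σ y * L τ y ∂μ ∂ν ∂ν := by
          refine lintegral_congr fun σ => ?_
          have h7 : ∀ y, K σ y * Gn y = ∫⁻ τ, K σ y * L τ y ∂ν := by
            intro y
            rw [lintegral_const_mul _ (hLym y), hLy y]
          calc ∫⁻ y, K σ y * Gn y ∂μ
              = ∫⁻ y, ∫⁻ τ, K σ y * L τ y ∂ν ∂μ := lintegral_congr h7
            _ = ∫⁻ τ, ∫⁻ y, K σ y * L τ y ∂μ ∂ν :=
                lintegral_lintegral_swap (hKLm σ).aemeasurable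
  set d₁ : ℝ → ℝ≥0∞ := fun σ => distFn μ f (ENNReal.ofReal σ) with hd₁
  set d₂ : ℝ → ℝ≥0∞ := fun τ => distFn μ g (ENNReal.ofReal τ) with hd₂
  have hd₁m : Measurable d₁ := distFn_comp_measurable μ f
  have hd₂m : Measurable d₂ := distFn_comp_measurable μ g
  have step2 : ∀ σ τ : ℝ, ∫⁻ y, K σ y * L τ y ∂μ ≤ min (d₁ σ) (d₂ τ) := by
    intro σ τ
    have hsA : MeasurableSet {y | ENNReal.ofReal σ < Fn y} :=
      measurableSet_lt measurable_const hFm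
    have hsB : MeasurableSet {y | ENNReal.ofReal τ < Gn y} :=
      measurableSet_lt measurable_const hGm
    have h8 : ∀ y, K σ y * L τ y =
        ({y | ENNReal.ofReal σ < Fn y} ∩ {y | ENNReal.ofReal τ < Gn y}).indicator
          (fun _ => (1:ℝ≥0∞)) y := by
      intro y
      by_cases h1 : ENNReal.ofReal σ < Fn y <;> by_cases h2 : ENNReal.ofReal τ < Gn y <;>
        simp [hK, hL, h1, h2, Set.indicator_apply, Set.mem_inter_iff, Set.mem_setOf_eq]
    rw [lintegral_congr h8, lintegral_indicator (hsA.inter hsB), setLIntegral_one]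
    exact le_min (measure_mono Set.inter_subset_left) (measure_mono Set.inter_subset_right)
  set M : ℝ → ℝ → ℝ≥0∞ := fun σ t => if ENNReal.ofReal t < d₁ σ then 1 else 0 with hM
  set N : ℝ → ℝ → ℝ≥0∞ := fun τ t => if ENNReal.ofReal t < d₂ τ then 1 else 0 with hN
  have hMtm : ∀ t, Measurable fun σ => M σ t := fun t =>
    Measurable.ite (measurableSet_lt measurable_const hd₁m) measurable_const measurable_const
  have hNtm : ∀ t, Measurable fun τ => N τ t := fun t =>
    Measurable.ite (measurableSet_lt measurable_const hd₂m) measurable_const measurable_const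
  have hMσm : ∀ σ, Measurable fun t => M σ t := fun σ =>
    Measurable.ite (measurableSet_lt ENNReal.measurable_ofReal measurable_const)
      measurable_const measurable_const
  have step3 : ∀ σ τ : ℝ, min (d₁ σ) (d₂ τ) = ∫⁻ t, M σ t * N τ t ∂ν := by
    intro σ τ
    have h9 : ∀ t, M σ t * N τ t =
        ({t : ℝ | ENNReal.ofReal t < min (d₁ σ) (d₂ τ)}).indicator (fun _ => (1:ℝ≥0∞)) t := by
      intro t
      by_cases h1 : ENNReal.ofReal t < d₁ σ <;> by_cases h2 : ENNReal.ofReal t < d₂ τ <;>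
        simp [hM, hN, h1, h2, Set.indicator_apply, Set.mem_setOf_eq, lt_min_iff]
    rw [lintegral_congr h9, lintegral_indicator
      (measurableSet_lt ENNReal.measurable_ofReal measurable_const), setLIntegral_one]
    exact (restrict_meas_lt _).symm
  set c₁ : ℝ → ℝ≥0∞ := fun t => ∫⁻ σ, M σ t ∂ν with hc₁
  set c₂ : ℝ → ℝ≥0∞ := fun t => ∫⁻ τ, N τ t ∂ν with hc₂
  have hc₁le : ∀ t : ℝ, c₁ t ≤ rearr μ f (ENNReal.ofReal t) := by
    intro t
    have h10 : c₁ t = ν {σ : ℝ | ENNReal.ofReal t < d₁ σ} := by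
      simp only [hc₁]
      have h11 : ∀ σ : ℝ, M σ t =
          ({σ : ℝ | ENNReal.ofReal t < d₁ σ}).indicator (fun _ => (1:ℝ≥0∞)) σ := by
        intro σ
        by_cases h1 : ENNReal.ofReal t < d₁ σ <;>
          simp [hM, h1, Set.indicator_apply, Set.mem_setOf_eq]
      rw [lintegral_congr h11, lintegral_indicator
        (measurableSet_lt measurable_const hd₁m), setLIntegral_one]
    rw [h10]
    exact meas_lt_distFn_le_rearr μ f _
  have hc₂le : ∀ t : ℝ, c₂ t ≤ rearr μ g (ENNReal.ofReal t) := by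
    intro t
    have h10 : c₂ t = ν {τ : ℝ | ENNReal.ofReal t < d₂ τ} := by
      simp only [hc₂]
      have h11 : ∀ τ : ℝ, N τ t =
          ({τ : ℝ | ENNReal.ofReal t < d₂ τ}).indicator (fun _ => (1:ℝ≥0∞)) τ := by
        intro τ
        by_cases h1 : ENNReal.ofReal t < d₂ τ <;>
          simp [hN, h1, Set.indicator_apply, Set.mem_setOf_eq]
      rw [lintegral_congr h11, lintegral_indicator
        (measurableSet_lt measurable_const hd₂m), setLIntegral_one]
    rw [h10]
    exact meas_lt_distFn_le_rearr μ g _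
  have hc₂m : Measurable c₂ := by
    have he : (Function.uncurry fun t τ => N τ t) =
        fun q : ℝ × ℝ => if ENNReal.ofReal q.1 < d₂ q.2 then 1 else 0 := rfl
    have hd₂1 : Measurable fun q : ℝ × ℝ => d₂ q.2 := by
      exact hd₂m.comp measurable_snd
    have h12 : Measurable (Function.uncurry fun t τ => N τ t) := by
      rw [he]
      exact Measurable.ite (measurableSet_lt (measurable_fst.ennreal_ofReal) hd₂1)
        measurable_const measurable_const
    exact h12.lintegral_prod_right'
  have hNswapm : Measurable (Function.uncurry fun τ t => N τ t) := by
    have he : (Function.uncurry fun τ t => N τ t) =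
        fun q : ℝ × ℝ => if ENNReal.ofReal q.2 < d₂ q.1 then 1 else 0 := rfl
    have hd₂1 : Measurable fun q : ℝ × ℝ => d₂ q.1 := by
      exact hd₂m.comp measurable_fst
    rw [he]
    exact Measurable.ite (measurableSet_lt (measurable_snd.ennreal_ofReal) hd₂1)
      measurable_const measurable_const
  have hMswapm : Measurable (Function.uncurry fun σ t => M σ t * c₂ t) := by
    have he : (Function.uncurry fun σ t => M σ t * c₂ t) =
        fun q : ℝ × ℝ => (if ENNReal.ofReal q.2 < d₁ q.1 then 1 else 0) * c₂ q.2 := rfl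
    have hd₁1 : Measurable fun q : ℝ × ℝ => d₁ q.1 := by
      exact hd₁m.comp measurable_fst
    have hc₂1 : Measurable fun q : ℝ × ℝ => c₂ q.2 := by
      exact hc₂m.comp measurable_snd
    rw [he]
    exact Measurable.mul (Measurable.ite (measurableSet_lt (measurable_snd.ennreal_ofReal) hd₁1)
      measurable_const measurable_const) hc₂1
  calc ∫⁻ y, Fn y * Gn y ∂μ
      = ∫⁻ σ, ∫⁻ τ, ∫⁻ y, K σ y * L τ y ∂μ ∂ν ∂ν := step1
    _ ≤ ∫⁻ σ, ∫⁻ τ, min (d₁ σ) (d₂ τ) ∂ν ∂ν :=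
        lintegral_mono fun σ => lintegral_mono fun τ => step2 σ τ
    _ = ∫⁻ σ, ∫⁻ τ, ∫⁻ t, M σ t * N τ t ∂ν ∂ν ∂ν :=
        lintegral_congr fun σ => lintegral_congr fun τ => step3 σ τ
    _ = ∫⁻ σ, ∫⁻ t, M σ t * c₂ t ∂ν ∂ν := by
        refine lintegral_congr fun σ => ?_
        have h13 : Measurable (Function.uncurry fun τ t => M σ t * N τ t) := by
          have he : (Function.uncurry fun τ t => M σ t * N τ t) =
              fun q : ℝ × ℝ => (fun q₂ : ℝ × ℝ => M σ q₂.2)  q * (Function.uncurry fun τ t => N τ t) q := rfl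
          rw [he]
          refine Measurable.mul ?_ hNswapm
          exact (hMσm σ).comp measurable_snd
        calc ∫⁻ τ, ∫⁻ t, M σ t * N τ t ∂ν ∂ν
            = ∫⁻ t, ∫⁻ τ, M σ t * N τ t ∂ν ∂ν := lintegral_lintegral_swap h13.aemeasurable
          _ = ∫⁻ t, M σ t * c₂ t ∂ν := by
              refine lintegral_congr fun t => ?_
              rw [lintegral_const_mul _ (hNtm t), hc₂]
    _ = ∫⁻ t, ∫⁻ σ, M σ t * c₂ t ∂ν ∂ν := lintegral_lintegral_swap hMswapm.aemeasurable
    _ = ∫⁻ t, c₁ t * c₂ t ∂ν := by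
        refine lintegral_congr fun t => ?_
        rw [lintegral_mul_const _ (hMtm t), hc₁]
    _ ≤ ∫⁻ t, rearr μ f (ENNReal.ofReal t) * rearr μ g (ENNReal.ofReal t) ∂ν :=
        lintegral_mono fun t => mul_le_mul' (hc₁le t) (hc₂le t)

lemma distFn_sub_left {n : ℕ} (x : V n) (g : V n → ℂ) (hg : Measurable g) :
    distFn volume (fun y => g (x - y)) = distFn volume g := by
  funext lam
  have hmp : MeasurePreserving (fun y : V n => x - y) volume volume :=
    Measure.measurePreserving_sub_left volume x
  have hms : MeasurableSet {z : V n | lam < ENNReal.ofReal ‖g z‖} :=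
    measurableSet_lt measurable_const (hg.norm.ennreal_ofReal)
  exact hmp.measure_preimage hms.nullMeasurableSet

end AuxLemmas

/-- Convolution of dual Lorentz spaces lands in `L^∞`. -/
theorem conv_lorentz_bounded (n : ℕ) (p p' : ℝ) (q₁ q₂ : ℝ≥0∞)
    (hp : 1 < p) (hconj : 1/p + 1/p' = 1)
    (hq₁ : 1 ≤ q₁) (hq₂ : 1 ≤ q₂) (hq : 1 ≤ 1/q₁ + 1/q₂)
    (f g : V n → ℂ)
    (hfm : AEStronglyMeasurable f volume) (hgm : AEStronglyMeasurable g volume)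
    (hf : lorentzNorm volume p q₁ f < ∞) (hg : lorentzNorm volume p' q₂ g < ∞) :
    eLpNorm (conv f g) ∞ volume ≤
      lorentzNorm volume p q₁ f * lorentzNorm volume p' q₂ g := by
  have hp0 : (0:ℝ) < p := by linarith
  have h1p : 0 ≤ 1/p := by positivity
  have hplt : 1/p < 1 := by rw [div_lt_one hp0]; exact hp
  have h1p' : 0 ≤ 1/p' := by linarith
  set f' := hfm.mk f with hf'def
  have hff' : f =ᵐ[volume] f' := hfm.ae_eq_mk
  have hfmeas : Measurable f' := hfm.stronglyMeasurable_mk.measurable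
  set g' := hgm.mk g with hg'def
  have hgg' : g =ᵐ[volume] g' := hgm.ae_eq_mk
  have hgmeas : Measurable g' := hgm.stronglyMeasurable_mk.measurable
  have hLf : lorentzNorm volume p q₁ f = lorentzNorm volume p q₁ f' :=
    lorentzNorm_congr p q₁ hff'
  have hLg : lorentzNorm volume p' q₂ g = lorentzNorm volume p' q₂ g' :=
    lorentzNorm_congr p' q₂ hgg'
  have hconv : conv f g = conv f' g' := by
    funext x
    refine integral_congr_ae ?_
    have h1 : (fun y : V n => g (x - y)) =ᵐ[volume] fun y => g' (x - y) :=
      (Measure.measurePreserving_sub_left volume x).quasiMeasurePreserving.ae_eq hgg'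
    filter_upwards [hff', h1] with y h2 h3
    rw [h2, h3]
  rw [hconv, hLf, hLg, eLpNorm_exponent_top]
  have ha : Antitone fun t : ℝ => rearr volume f' (ENNReal.ofReal t) := fun s t h =>
    sInf_le_sInf fun _ hlam => le_trans hlam (ENNReal.ofReal_le_ofReal h)
  have hb : Antitone fun t : ℝ => rearr volume g' (ENNReal.ofReal t) := fun s t h =>
    sInf_le_sInf fun _ hlam => le_trans hlam (ENNReal.ofReal_le_ofReal h)
  have hpair := pairing ha hb h1p h1p' hconj hq₁ hq₂ hq
  have hbound : ∀ x, (‖conv f' g' x‖₊ : ℝ≥0∞) ≤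
      lorentzNorm volume p q₁ f' * lorentzNorm volume p' q₂ g' := by
    intro x
    calc (‖conv f' g' x‖₊ : ℝ≥0∞)
        ≤ ∫⁻ y, (‖f' y * g' (x - y)‖₊ : ℝ≥0∞) :=
          enorm_integral_le_lintegral_enorm _
      _ = ∫⁻ y, ENNReal.ofReal ‖f' y‖ * ENNReal.ofReal ‖g' (x - y)‖ := by
          refine lintegral_congr fun y => ?_
          rw [← ENNReal.ofReal_coe_nnreal, coe_nnnorm, norm_mul, ENNReal.ofReal_mul (norm_nonneg _)]
      _ ≤ ∫⁻ t in Set.Ioi (0:ℝ), rearr volume f' (ENNReal.ofReal t) *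
            rearr volume (fun y => g' (x - y)) (ENNReal.ofReal t) :=
          hardy_littlewood volume hfmeas.norm
            ((hgmeas.comp (measurable_const.sub measurable_id)).norm)
      _ = ∫⁻ t in Set.Ioi (0:ℝ), rearr volume f' (ENNReal.ofReal t) *
            rearr volume g' (ENNReal.ofReal t) := by
          rw [show rearr volume (fun y : V n => g' (x - y)) = rearr volume g' from by
            unfold rearr; rw [distFn_sub_left x g' hgmeas]]
      _ ≤ Nq p q₁ (fun t => rearr volume f' (ENNReal.ofReal t)) *
            Nq p' q₂ (fun t => rearr volume g' (ENNReal.ofReal t)) := hpair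
      _ = lorentzNorm volume p q₁ f' * lorentzNorm volume p' q₂ g' := by
          rw [← lorentzNorm_eq_Nq, ← lorentzNorm_eq_Nq]
  exact essSup_le_of_ae_le _ (ae_of_all _ hbound)


end MHD
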